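/- arXiv:math/0702364 — 2 statements merged into one kernel-verified Lean document; each statement's English description precedes it below -/
import Mathlib

section
/- Let (Ω, F, (Fₙ)_{n∈ℕ}, P) be a filtered probability space and let (Mₙ)_{n∈ℕ} be a martingale with respect to (Fₙ) with M₀ = 0 and |M_{n+1} − Mₙ| ≤ A almost surely for all n, where A > 0. Define the predictable quadratic variation Vₙ = Σ_{k=0}^{n−1} E[(M_{k+1} − M_k)² | F_k]. Fix θ with 0 < θ < 1/A and set α = θ²/(2(1 − θA)). Then the process Zₙ = exp(θMₙ − αVₙ) is a supermartingale with respect to (Fₙ). -/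
open MeasureTheory Finset Real
open scoped Nat

/-!
Since `|θ ΔM| ≤ θA < 1`, comparing the exponential series with a geometric one gives
`exp (θ ΔM) ≤ 1 + θ ΔM + α ΔM²`. Conditioning on `Fₙ` kills the linear term (martingale property),
so `E[exp (θ ΔMₙ) | Fₙ] ≤ 1 + α E[ΔMₙ² | Fₙ] ≤ exp (α (Vₙ₊₁ - Vₙ))`. As `θ Mₙ - α Vₙ₊₁` is
`Fₙ`-measurable, it can be pulled out of the conditional expectation of `Zₙ₊₁`, giving `Zₙ`.
-/

theorem Real.exp_le_one_add_add_sq_div_of_abs_le {x c : ℝ} (hx : |x| ≤ c) (hc : c < 1) :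
    exp x ≤ 1 + x + x ^ 2 / (2 * (1 - c)) := by
  have hc0 : 0 ≤ c := (abs_nonneg x).trans hx
  have htail : HasSum (fun n : ℕ => x ^ (n + 2) / (n + 2)!) (exp x - (1 + x)) := by
    have := (hasSum_nat_add_iff' 2).mpr (exp_eq_exp_ℝ ▸ NormedSpace.expSeries_div_hasSum_exp x)
    simpa [sum_range_succ] using this
  have hgeom : HasSum (fun n : ℕ => x ^ 2 / 2 * c ^ n) (x ^ 2 / 2 * (1 - c)⁻¹) :=
    (hasSum_geometric_of_lt_one hc0 hc).mul_left _
  have hterm (n : ℕ) : x ^ (n + 2) / (n + 2)! ≤ x ^ 2 / 2 * c ^ n := by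
    have hfac : (2 : ℝ) ≤ (n + 2)! := by exact_mod_cast Nat.factorial_le (m := 2) (by omega)
    have hnum : x ^ (n + 2) ≤ x ^ 2 * c ^ n :=
      calc x ^ (n + 2) ≤ |x| ^ 2 * |x| ^ n := by
            rw [← pow_add, add_comm, ← abs_pow]
            exact le_abs_self _
        _ ≤ x ^ 2 * c ^ n := by rw [sq_abs]; gcongr
    calc x ^ (n + 2) / (n + 2)! ≤ x ^ 2 * c ^ n / 2 :=
          div_le_div₀ (by positivity) hnum two_pos hfac
      _ = x ^ 2 / 2 * c ^ n := by ring
  linarith [hasSum_le hterm htail hgeom,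
    show x ^ 2 / 2 * (1 - c)⁻¹ = x ^ 2 / (2 * (1 - c)) by rw [← div_eq_mul_inv, div_div]]

section

variable {Ω : Type*} {m m0 : MeasurableSpace Ω} {μ : Measure Ω}

theorem integrable_exp_of_ae_le [IsFiniteMeasure μ] {X : Ω → ℝ} {C : ℝ}
    (hX : AEStronglyMeasurable X μ) (hXC : ∀ᵐ ω ∂μ, X ω ≤ C) : Integrable (fun ω => exp (X ω)) μ :=
  Integrable.of_bound (continuous_exp.comp_aestronglyMeasurable hX) (exp C) <| by
    filter_upwards [hXC] with ω hω
    rwa [norm_of_nonneg (exp_nonneg _), exp_le_exp]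

theorem integrable_exp_mul_of_ae_abs_le [IsFiniteMeasure μ] {D : Ω → ℝ} {A θ : ℝ}
    (hD : AEStronglyMeasurable D μ) (hD_bdd : ∀ᵐ ω ∂μ, |D ω| ≤ A) (hθ : 0 ≤ θ) :
    Integrable (fun ω => exp (θ * D ω)) μ :=
  integrable_exp_of_ae_le (C := θ * A) (hD.const_mul θ) <| by
    filter_upwards [hD_bdd] with ω hω
    exact mul_le_mul_of_nonneg_left ((le_abs_self _).trans hω) hθ

theorem condExp_exp_mul_le_exp_condExp_sq [IsFiniteMeasure μ] (hm : m ≤ m0) {D : Ω → ℝ} {A θ : ℝ}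
    (hD : Integrable D μ) (hD_bdd : ∀ᵐ ω ∂μ, |D ω| ≤ A) (hD_cond : μ[D|m] =ᵐ[μ] 0)
    (hθ : 0 ≤ θ) (hθA : θ * A < 1) :
    μ[fun ω => exp (θ * D ω)|m] ≤ᵐ[μ]
      fun ω => exp (θ ^ 2 / (2 * (1 - θ * A)) * μ[fun ω => D ω ^ 2|m] ω) := by
  set α := θ ^ 2 / (2 * (1 - θ * A))
  have hD_sq : Integrable (fun ω => D ω ^ 2) μ :=
    Integrable.of_bound (hD.aestronglyMeasurable.pow 2) (A ^ 2) <| by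
      filter_upwards [hD_bdd] with ω hω
      rw [norm_eq_abs, abs_pow]
      exact pow_le_pow_left₀ (abs_nonneg _) hω 2
  have hquad : Integrable (fun ω => 1 + θ * D ω + α * D ω ^ 2) μ :=
    ((integrable_const 1).add (hD.const_mul θ)).add (hD_sq.const_mul α)
  have hle : (fun ω => exp (θ * D ω)) ≤ᵐ[μ] fun ω => 1 + θ * D ω + α * D ω ^ 2 := by
    filter_upwards [hD_bdd] with ω hω
    have hx : |θ * D ω| ≤ θ * A := by
      rw [abs_mul, abs_of_nonneg hθ]
      exact mul_le_mul_of_nonneg_left hω hθ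
    calc exp (θ * D ω) ≤ 1 + θ * D ω + (θ * D ω) ^ 2 / (2 * (1 - θ * A)) :=
          exp_le_one_add_add_sq_div_of_abs_le hx hθA
      _ = 1 + θ * D ω + α * D ω ^ 2 := by ring
  have hcond_quad : μ[fun ω => 1 + θ * D ω + α * D ω ^ 2|m] =ᵐ[μ]
      fun ω => 1 + θ * μ[D|m] ω + α * μ[fun ω => D ω ^ 2|m] ω := by
    have hlin : μ[fun ω => θ * D ω|m] =ᵐ[μ] fun ω => θ * μ[D|m] ω := condExp_smul θ D m
    have hsq : μ[fun ω => α * D ω ^ 2|m] =ᵐ[μ] fun ω => α * μ[fun ω => D ω ^ 2|m] ω :=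
      condExp_smul α _ m
    filter_upwards [condExp_add ((integrable_const 1).add (hD.const_mul θ)) (hD_sq.const_mul α) m,
      condExp_add (integrable_const 1) (hD.const_mul θ) m, hlin, hsq] with ω h₁ h₂ h₃ h₄
    refine h₁.trans ?_
    simp only [Pi.add_apply, h₂, h₃, h₄, condExp_const hm]
  filter_upwards [condExp_mono (integrable_exp_mul_of_ae_abs_le hD.1 hD_bdd hθ) hquad hle,
    hcond_quad, hD_cond] with ω hmono hquad hzero
  rw [hquad, hzero, Pi.zero_apply, mul_zero, add_zero] at hmono
  linarith [add_one_le_exp (α * μ[fun ω => D ω ^ 2|m] ω)]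

theorem condExp_exp_sub_mul_le_exp {Y B g : Ω → ℝ} (hY : StronglyMeasurable[m] Y)
    (hB : StronglyMeasurable[m] B) (hg : Integrable g μ)
    (hYg : Integrable (fun ω => exp (Y ω - B ω) * g ω) μ)
    (hgB : μ[g|m] ≤ᵐ[μ] fun ω => exp (B ω)) :
    μ[fun ω => exp (Y ω - B ω) * g ω|m] ≤ᵐ[μ] fun ω => exp (Y ω) := by
  change μ[(fun ω => exp (Y ω - B ω)) * g|m] ≤ᵐ[μ] _
  filter_upwards [condExp_mul_of_stronglyMeasurable_left
    (continuous_exp.comp_stronglyMeasurable (hY.sub hB)) hYg hg, hgB] with ω h₁ h₂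
  calc μ[(fun ω => exp (Y ω - B ω)) * g|m] ω = exp (Y ω - B ω) * μ[g|m] ω := h₁
    _ ≤ exp (Y ω - B ω) * exp (B ω) := mul_le_mul_of_nonneg_left h₂ (exp_nonneg _)
    _ = exp (Y ω) := by rw [← exp_add, sub_add_cancel]

end

section Martingale

variable {Ω : Type*} {m0 : MeasurableSpace Ω} {μ : Measure Ω} {F : Filtration ℕ m0}
  {M : ℕ → Ω → ℝ}

theorem MeasureTheory.Martingale.condExp_sub_succ_ae_eq_zero (hM : Martingale M F μ) (n : ℕ) :
    μ[fun ω => M (n + 1) ω - M n ω|F n] =ᵐ[μ] 0 := by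
  change μ[M (n + 1) - M n|F n] =ᵐ[μ] 0
  filter_upwards [condExp_sub (hM.integrable (n + 1)) (hM.integrable n) (F n),
    hM.condExp_ae_eq n.le_succ, hM.condExp_ae_eq le_rfl] with ω h₁ h₂ h₃
  rw [h₁, Pi.sub_apply, h₂, h₃, sub_self, Pi.zero_apply]

theorem ae_abs_le_mul_of_abs_sub_succ_le (hM0 : ∀ ω, M 0 ω = 0) {A : ℝ}
    (hbdd : ∀ n, ∀ᵐ ω ∂μ, |M (n + 1) ω - M n ω| ≤ A) (n : ℕ) :
    ∀ᵐ ω ∂μ, |M n ω| ≤ n * A := by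
  induction n with
  | zero => simp [hM0]
  | succ n ih =>
    filter_upwards [ih, hbdd n] with ω hn hstep
    push_cast
    linarith [abs_sub_abs_le_abs_sub (M (n + 1) ω) (M n ω)]

theorem stronglyAdapted_sum_range_condExp (f : ℕ → Ω → ℝ) :
    StronglyAdapted F fun n ω => ∑ k ∈ range n, μ[f k|F k] ω := fun _ =>
  Finset.stronglyMeasurable_fun_sum _ fun _ hk =>
    stronglyMeasurable_condExp.mono (F.mono (mem_range.mp hk).le)

theorem ae_sum_range_condExp_nonneg {f : ℕ → Ω → ℝ} (hf : ∀ k, 0 ≤ᵐ[μ] f k) (n : ℕ) :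
    0 ≤ᵐ[μ] fun ω => ∑ k ∈ range n, μ[f k|F k] ω := by
  filter_upwards [ae_all_iff.2 fun k => condExp_nonneg (m := F k) (hf k)] with ω hω
  exact sum_nonneg fun k _ => hω k

end Martingale

theorem stmt_1_general {Ω : Type*} {m0 : MeasurableSpace Ω} {μ : Measure Ω}
    [IsProbabilityMeasure μ] (F : Filtration ℕ m0)
    (M : ℕ → Ω → ℝ) (hM : Martingale M F μ) (hM0 : ∀ ω, M 0 ω = 0)
    (A : ℝ)
    (hbdd : ∀ n, ∀ᵐ ω ∂μ, |M (n + 1) ω - M n ω| ≤ A)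
    (θ α : ℝ) (hθ : 0 < θ) (hθA : θ < 1 / A)
    (hα : α = θ ^ 2 / (2 * (1 - θ * A)))
    (V : ℕ → Ω → ℝ)
    (hV : ∀ n ω, V n ω =
      ∑ k ∈ Finset.range n, (μ[fun ω' => (M (k + 1) ω' - M k ω') ^ 2 | F k]) ω) :
    Supermartingale (fun n ω => Real.exp (θ * M n ω - α * V n ω)) F μ := by
  have hθA_lt : θ * A < 1 := (lt_div_iff₀ (one_div_pos.mp (hθ.trans hθA))).mp hθA
  have hα0 : 0 ≤ α := hα ▸ div_nonneg (sq_nonneg θ) (by linarith)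
  have hV_eq : V = fun n ω => ∑ k ∈ range n, μ[fun ω' => (M (k + 1) ω' - M k ω') ^ 2|F k] ω :=
    funext fun n => funext (hV n)
  have hV_adp : StronglyAdapted F V := hV_eq ▸ stronglyAdapted_sum_range_condExp _
  have hV_nonneg (n : ℕ) : 0 ≤ᵐ[μ] V n :=
    hV_eq ▸ ae_sum_range_condExp_nonneg (fun k => ae_of_all μ fun ω => sq_nonneg _) n
  have hX_adp (n : ℕ) : StronglyMeasurable[F n] fun ω => θ * M n ω - α * V n ω :=
    ((hM.stronglyAdapted n).const_mul θ).sub ((hV_adp n).const_mul α)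
  have hZ_int (n : ℕ) : Integrable (fun ω => exp (θ * M n ω - α * V n ω)) μ := by
    refine integrable_exp_of_ae_le (C := θ * (n * A))
      ((hX_adp n).mono (F.le n)).aestronglyMeasurable ?_
    filter_upwards [ae_abs_le_mul_of_abs_sub_succ_le hM0 hbdd n, hV_nonneg n] with ω hMn hVn
    nlinarith [le_abs_self (M n ω), mul_nonneg hα0 hVn]
  refine supermartingale_nat (fun n => continuous_exp.comp_stronglyMeasurable (hX_adp n)) hZ_int
    fun n => ?_
  have hstep := condExp_exp_mul_le_exp_condExp_sq (D := fun ω => M (n + 1) ω - M n ω) (F.le n)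
    ((hM.integrable (n + 1)).sub (hM.integrable n)) (hbdd n) (hM.condExp_sub_succ_ae_eq_zero n)
    hθ.le hθA_lt
  have hsplit : (fun ω => exp (θ * M (n + 1) ω - α * V (n + 1) ω)) = fun ω =>
      exp (θ * M n ω - α * V n ω - α * μ[fun ω' => (M (n + 1) ω' - M n ω') ^ 2|F n] ω) *
        exp (θ * (M (n + 1) ω - M n ω)) := by
    funext ω
    rw [← exp_add, hV (n + 1), sum_range_succ, ← hV n]
    ring_nf
  rw [hsplit]
  exact condExp_exp_sub_mul_le_exp (hX_adp n) (stronglyMeasurable_condExp.const_mul α)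
    (integrable_exp_mul_of_ae_abs_le ((hM.integrable (n + 1)).sub (hM.integrable n)).1 (hbdd n)
      hθ.le) (hsplit ▸ hZ_int (n + 1)) (hα ▸ hstep)

theorem stmt_1 {Ω : Type*} {m0 : MeasurableSpace Ω} {μ : Measure Ω}
    [IsProbabilityMeasure μ] (F : Filtration ℕ m0)
    (M : ℕ → Ω → ℝ) (hM : Martingale M F μ) (hM0 : ∀ ω, M 0 ω = 0)
    (A : ℝ) (hA : 0 < A)
    (hbdd : ∀ n, ∀ᵐ ω ∂μ, |M (n + 1) ω - M n ω| ≤ A)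
    (θ α : ℝ) (hθ : 0 < θ) (hθA : θ < 1 / A)
    (hα : α = θ ^ 2 / (2 * (1 - θ * A)))
    (V : ℕ → Ω → ℝ)
    (hV : ∀ n ω, V n ω =
      ∑ k ∈ Finset.range n, (μ[fun ω' => (M (k + 1) ω' - M k ω') ^ 2 | F k]) ω) :
    Supermartingale (fun n ω => Real.exp (θ * M n ω - α * V n ω)) F μ :=
  stmt_1_general F M hM hM0 A hbdd θ α hθ hθA hα V hV
end

section
/- Let (Ω, F, (Fₙ)_{n∈ℕ}, P) be a filtered probability space and let (Mₙ)_{n∈ℕ} be a martingale with respect to (Fₙ) with M₀ = 0 and |M_{n+1} − Mₙ| ≤ A almost surely for all n, where A > 0. Define Vₙ = Σ_{k=0}^{n−1} E[(M_{k+1} − M_k)² | F_k]. Then for every δ > 0, ρ > 0 and N ∈ ℕ, P( max_{0 ≤ n ≤ N} |Mₙ| ≥ δ and V_N < ρ ) ≤ 2 exp( − δ² / (2(Aδ + ρ)) ). -/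
/-!
For `|x| ≤ A` and `0 ≤ l`, `l * A < 1`, comparing the exponential series with a geometric one
gives `exp (l * x) ≤ 1 + l * x + c * x ^ 2` with `c = l ^ 2 / (2 * (1 - l * A))`. Conditioning
on `F n`, the linear term of a martingale increment vanishes, so `exp (l * Mₙ - c * Vₙ)` is a
positive supermartingale started at `1`. On the event of the theorem it reaches
`exp (l * δ - c * ρ)` by time `N`; stopping it at that hitting time and applying optional
stopping bounds the probability by `exp (-(l * δ - c * ρ))`, which for `l = δ / (A * δ + ρ)`
is `exp (-δ ^ 2 / (2 * (A * δ + ρ)))`. The factor `2` comes from applying this to `M` and `-M`.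
-/

open MeasureTheory Finset
open scoped Nat

theorem Real.exp_le_one_add_add_sq_div {u b : ℝ} (hb : b < 1) (hu : |u| ≤ b) :
    Real.exp u ≤ 1 + u + u ^ 2 / (2 * (1 - b)) := by
  have hb0 : 0 ≤ b := (abs_nonneg u).trans hu
  have hs := Real.summable_pow_div_factorial u
  have hgeom : HasSum (fun n : ℕ => u ^ 2 / 2 * b ^ n) (u ^ 2 / (2 * (1 - b))) := by
    rw [← div_div, div_eq_mul_inv (u ^ 2 / 2)]
    exact (hasSum_geometric_of_lt_one hb0 hb).mul_left _
  have hterm : ∀ n : ℕ, u ^ (n + 2) / (n + 2)! ≤ u ^ 2 / 2 * b ^ n := by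
    intro n
    have hfac : (2 : ℝ) ≤ (n + 2)! := by
      exact_mod_cast (Nat.self_le_factorial _).trans' (by omega)
    calc u ^ (n + 2) / (n + 2)! ≤ u ^ 2 * b ^ n / (n + 2)! := by
          gcongr
          calc u ^ (n + 2) ≤ |u| ^ (n + 2) := (le_abs_self _).trans (abs_pow u _).le
            _ = u ^ 2 * |u| ^ n := by rw [pow_add, sq_abs, mul_comm]
            _ ≤ u ^ 2 * b ^ n := by gcongr
      _ ≤ u ^ 2 * b ^ n / 2 := by gcongr
      _ = u ^ 2 / 2 * b ^ n := by ring
  calc Real.exp u = ∑ n ∈ range 2, u ^ n / n ! + ∑' n, u ^ (n + 2) / (n + 2)! := by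
        rw [Real.exp_eq_exp_ℝ, NormedSpace.exp_eq_tsum_div, hs.sum_add_tsum_nat_add]
    _ ≤ 1 + u + u ^ 2 / (2 * (1 - b)) := by
        have := ((summable_nat_add_iff 2).mpr hs).tsum_le_tsum hterm hgeom.summable
        rw [hgeom.tsum_eq] at this
        simpa [sum_range_succ] using this

theorem Real.exp_mul_le_one_add_add_sq {l A x : ℝ} (hl : 0 ≤ l) (hlA : l * A < 1)
    (hx : |x| ≤ A) :
    Real.exp (l * x) ≤ 1 + l * x + l ^ 2 / (2 * (1 - l * A)) * x ^ 2 := by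
  have hlx : |l * x| ≤ l * A := by
    rw [abs_mul, abs_of_nonneg hl]; exact mul_le_mul_of_nonneg_left hx hl
  calc Real.exp (l * x) ≤ 1 + l * x + (l * x) ^ 2 / (2 * (1 - l * A)) :=
        Real.exp_le_one_add_add_sq_div hlA hlx
    _ = 1 + l * x + l ^ 2 / (2 * (1 - l * A)) * x ^ 2 := by ring

namespace MeasureTheory

theorem condExp_exp_mul_le_exp {Ω : Type*} {m m0 : MeasurableSpace Ω} {μ : Measure Ω}
    [IsFiniteMeasure μ] (hm : m ≤ m0) {D : Ω → ℝ} {A l c : ℝ} (hD : AEStronglyMeasurable D μ)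
    (hDA : ∀ᵐ ω ∂μ, |D ω| ≤ A) (hD0 : μ[D | m] =ᵐ[μ] 0)
    (hquad : ∀ x, |x| ≤ A → Real.exp (l * x) ≤ 1 + l * x + c * x ^ 2) :
    μ[fun ω => Real.exp (l * D ω) | m] ≤ᵐ[μ]
      fun ω => Real.exp (c * μ[fun ω => D ω ^ 2 | m] ω) := by
  have hDint : Integrable D μ := .of_bound hD A (by simpa using hDA)
  have hD2int : Integrable (fun ω => D ω ^ 2) μ :=
    .of_bound (hD.pow 2) (A ^ 2) (by
      filter_upwards [hDA] with ω hω
      simpa using pow_le_pow_left₀ (abs_nonneg _) hω 2)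
  have hpolyint : Integrable (fun ω => 1 + l * D ω + c * D ω ^ 2) μ :=
    ((integrable_const 1).add (hDint.const_mul l)).add (hD2int.const_mul c)
  have hexp_le : (fun ω => Real.exp (l * D ω)) ≤ᵐ[μ] fun ω => 1 + l * D ω + c * D ω ^ 2 := by
    filter_upwards [hDA] with ω hω using hquad _ hω
  have hexpint : Integrable (fun ω => Real.exp (l * D ω)) μ :=
    hpolyint.mono' (Real.continuous_exp.comp_aestronglyMeasurable (hD.const_mul l))
      (by filter_upwards [hexp_le] with ω hω; simpa [abs_of_pos (Real.exp_pos _)] using hω)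
  have hlin : μ[fun ω => 1 + l * D ω + c * D ω ^ 2 | m]
      =ᵐ[μ] fun ω => 1 + l * μ[D | m] ω + c * μ[fun ω => D ω ^ 2 | m] ω := by
    have h1 := condExp_add ((integrable_const 1).add (hDint.smul l)) (hD2int.smul c) m
    have h2 := condExp_add (integrable_const 1) (hDint.smul l) m
    have h3 := condExp_smul (μ := μ) l D m
    have h4 := condExp_smul (μ := μ) c (fun ω => D ω ^ 2) m
    filter_upwards [h1, h2, h3, h4] with ω h1 h2 h3 h4
    simp only [Pi.add_apply, Pi.smul_apply, smul_eq_mul] at h1 h2 h3 h4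
    change μ[((fun _ => 1) + l • D) + c • fun ω => D ω ^ 2 | m] ω = _
    rw [h1, h2, h3, h4, condExp_const hm]
  filter_upwards [condExp_mono hexpint hpolyint hexp_le, hlin, hD0] with ω hmono hlin hD0
  rw [hlin, hD0] at hmono
  have := Real.add_one_le_exp (c * μ[fun ω => D ω ^ 2 | m] ω)
  simp only [Pi.zero_apply, mul_zero, add_zero] at hmono
  linarith

theorem Supermartingale.mul_measureReal_exists_le_le_integral {Ω : Type*} {m0 : MeasurableSpace Ω}
    {μ : Measure Ω} [IsFiniteMeasure μ] {F : Filtration ℕ m0} {Z : ℕ → Ω → ℝ}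
    (hZ : Supermartingale Z F μ) (hZ_nonneg : ∀ n ω, 0 ≤ Z n ω) (ε : ℝ) (N : ℕ) :
    ε * μ.real {ω | ∃ n ≤ N, ε ≤ Z n ω} ≤ ∫ ω, Z 0 ω ∂μ := by
  set S := {ω | ∃ n ≤ N, ε ≤ Z n ω}
  have hS : MeasurableSet S := by
    have hS_eq : S = ⋃ n ∈ Set.Iic N, {ω | ε ≤ Z n ω} := by ext; simp [S]
    rw [hS_eq]
    exact .biUnion (Set.to_countable _) fun n _ =>
      measurableSet_le measurable_const ((hZ.stronglyMeasurable n).measurable.mono (F.le n) le_rfl)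
  let τ : Ω → ℕ∞ := fun ω => (hittingBtwn Z (Set.Ici ε) 0 N ω : ℕ)
  have hτ : IsStoppingTime F τ :=
    hZ.stronglyAdapted.adapted.isStoppingTime_hittingBtwn measurableSet_Ici
  have hτN : ∀ ω, τ ω ≤ N := fun ω => WithTop.coe_le_coe.mpr (hittingBtwn_le (u := Z) ω)
  have hZτ : Integrable (stoppedValue Z τ) μ := integrable_stoppedValue ℕ hτ hZ.integrable hτN
  have hε_le : ∀ ω ∈ S, ε ≤ stoppedValue Z τ ω := fun ω ⟨n, hn, hεn⟩ =>
    stoppedValue_hittingBtwn_mem ⟨n, ⟨n.zero_le, hn⟩, hεn⟩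
  have hoptional : ∫ ω, stoppedValue Z τ ω ∂μ ≤ ∫ ω, Z 0 ω ∂μ := by
    have := hZ.neg.expected_stoppedValue_mono (isStoppingTime_const F 0) hτ
      (fun ω => bot_le) hτN
    simpa [stoppedValue, integral_neg] using this
  calc ε * μ.real S ≤ ∫ ω in S, stoppedValue Z τ ω ∂μ :=
        setIntegral_ge_of_const_le_real hS (measure_ne_top μ S) hε_le hZτ.integrableOn
    _ ≤ ∫ ω, stoppedValue Z τ ω ∂μ :=
        setIntegral_le_integral hZτ (.of_forall fun ω => hZ_nonneg _ _)
    _ ≤ ∫ ω, Z 0 ω ∂μ := hoptional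

section PredQuadVar

variable {Ω : Type*} {m0 : MeasurableSpace Ω} (μ : Measure Ω) (F : Filtration ℕ m0)
  (M : ℕ → Ω → ℝ)

noncomputable def predQuadVar (n : ℕ) (ω : Ω) : ℝ :=
  ∑ k ∈ range n, μ[fun ω' => (M (k + 1) ω' - M k ω') ^ 2 | F k] ω

@[simp]
theorem predQuadVar_zero : predQuadVar μ F M 0 = 0 := by
  ext ω; simp [predQuadVar]

theorem predQuadVar_succ (n : ℕ) :
    predQuadVar μ F M (n + 1) =
      predQuadVar μ F M n + μ[fun ω => (M (n + 1) ω - M n ω) ^ 2 | F n] := by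
  ext ω; simp [predQuadVar, sum_range_succ]

theorem predQuadVar_neg : predQuadVar μ F (-M) = predQuadVar μ F M := by
  have hsq (k : ℕ) : (fun ω => ((-M) (k + 1) ω - (-M) k ω) ^ 2) =
      fun ω => (M (k + 1) ω - M k ω) ^ 2 := by
    ext ω; simp only [Pi.neg_apply]; ring
  ext n ω; simp only [predQuadVar, hsq]

variable {μ F M}

theorem stronglyMeasurable_predQuadVar {n i : ℕ} (hni : n ≤ i + 1) :
    StronglyMeasurable[F i] (predQuadVar μ F M n) := by
  unfold predQuadVar
  refine Finset.stronglyMeasurable_fun_sum _ fun k hk => stronglyMeasurable_condExp.mono (F.mono ?_)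
  have := mem_range.mp hk
  omega

theorem stronglyAdapted_predQuadVar : StronglyAdapted F (predQuadVar μ F M) :=
  fun n => stronglyMeasurable_predQuadVar n.le_succ

theorem ae_monotone_predQuadVar : ∀ᵐ ω ∂μ, Monotone fun n => predQuadVar μ F M n ω := by
  have hnonneg : ∀ᵐ ω ∂μ, ∀ k, 0 ≤ μ[fun ω' => (M (k + 1) ω' - M k ω') ^ 2 | F k] ω :=
    ae_all_iff.mpr fun k => condExp_nonneg (.of_forall fun ω => sq_nonneg _)
  filter_upwards [hnonneg] with ω hω
  refine monotone_nat_of_le_succ fun n => ?_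
  simpa [predQuadVar_succ] using hω n

end PredQuadVar

theorem ae_abs_le_mul_of_abs_sub_le {Ω : Type*} {m0 : MeasurableSpace Ω} {μ : Measure Ω}
    {M : ℕ → Ω → ℝ} {A : ℝ} (hM0 : ∀ ω, M 0 ω = 0)
    (hbdd : ∀ n, ∀ᵐ ω ∂μ, |M (n + 1) ω - M n ω| ≤ A) (n : ℕ) :
    ∀ᵐ ω ∂μ, |M n ω| ≤ n * A := by
  induction n with
  | zero => exact .of_forall fun ω => by simp [hM0 ω]
  | succ n ih =>
    filter_upwards [ih, hbdd n] with ω hn hstep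
    have := abs_sub_abs_le_abs_sub (M (n + 1) ω) (M n ω)
    push_cast
    linarith

theorem Martingale.supermartingale_exp_mul_sub_predQuadVar {Ω : Type*} {m0 : MeasurableSpace Ω}
    {μ : Measure Ω} [IsFiniteMeasure μ] {F : Filtration ℕ m0} {M : ℕ → Ω → ℝ}
    (hM : Martingale M F μ) (hM0 : ∀ ω, M 0 ω = 0) {A : ℝ}
    (hbdd : ∀ n, ∀ᵐ ω ∂μ, |M (n + 1) ω - M n ω| ≤ A) {l c : ℝ} (hc : 0 ≤ c)
    (hquad : ∀ x, |x| ≤ A → Real.exp (l * x) ≤ 1 + l * x + c * x ^ 2) :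
    Supermartingale (fun n ω => Real.exp (l * M n ω - c * predQuadVar μ F M n ω)) F μ := by
  set V := predQuadVar μ F M
  have hadapted : StronglyAdapted F fun n ω => Real.exp (l * M n ω - c * V n ω) := fun n =>
    Real.continuous_exp.comp_stronglyMeasurable
      (((hM.stronglyAdapted n).const_mul l).sub ((stronglyAdapted_predQuadVar n).const_mul c))
  have hint (n : ℕ) : Integrable (fun ω => Real.exp (l * M n ω - c * V n ω)) μ := by
    refine .of_bound ((hadapted n).mono (F.le n)).aestronglyMeasurable (Real.exp (|l| * (n * A))) ?_
    filter_upwards [ae_abs_le_mul_of_abs_sub_le hM0 hbdd n, ae_monotone_predQuadVar] with ω hM hV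
    have hV0 : 0 ≤ V n ω := by simpa [V] using hV n.zero_le
    rw [Real.norm_eq_abs, Real.abs_exp, Real.exp_le_exp]
    nlinarith [neg_abs_le l, le_abs_self l, abs_le.mp hM]
  refine supermartingale_nat hadapted hint fun n => ?_
  set D := M (n + 1) - M n
  set G := fun ω => Real.exp (l * M n ω - c * V (n + 1) ω)
  have hsplit : (fun ω => Real.exp (l * M (n + 1) ω - c * V (n + 1) ω)) =
      G * fun ω => Real.exp (l * D ω) := by
    ext ω
    simp only [G, D, Pi.mul_apply, Pi.sub_apply, ← Real.exp_add]
    congr 1; ring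
  have hG : StronglyMeasurable[F n] G :=
    Real.continuous_exp.comp_stronglyMeasurable
      (((hM.stronglyAdapted n).const_mul l).sub
        ((stronglyMeasurable_predQuadVar le_rfl).const_mul c))
  have hDmeas : AEStronglyMeasurable D μ :=
    ((hM.integrable _).sub (hM.integrable _)).aestronglyMeasurable
  have hexpD : Integrable (fun ω => Real.exp (l * D ω)) μ := by
    refine .of_bound (Real.continuous_exp.comp_aestronglyMeasurable (hDmeas.const_mul l))
      (Real.exp (|l| * A)) ?_
    filter_upwards [hbdd n] with ω hω
    rw [Real.norm_eq_abs, Real.abs_exp, Real.exp_le_exp]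
    exact (le_abs_self _).trans
      ((abs_mul l (D ω)).trans_le (mul_le_mul_of_nonneg_left hω (abs_nonneg l)))
  have hD0 : μ[D | F n] =ᵐ[μ] 0 := by
    filter_upwards [condExp_sub (hM.integrable (n + 1)) (hM.integrable n) (F n),
      hM.condExp_ae_eq n.le_succ, hM.condExp_ae_eq (le_refl n)] with ω h hsucc hn
    simp [D, h, hsucc, hn]
  have hcond := condExp_exp_mul_le_exp (F.le n) hDmeas (hbdd n) hD0 hquad
  calc μ[fun ω => Real.exp (l * M (n + 1) ω - c * V (n + 1) ω) | F n]
      =ᵐ[μ] G * μ[fun ω => Real.exp (l * D ω) | F n] := by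
        rw [hsplit]
        exact condExp_mul_of_stronglyMeasurable_left hG (hsplit ▸ hint (n + 1)) hexpD
    _ ≤ᵐ[μ] fun ω => Real.exp (l * M n ω - c * V n ω) := by
        filter_upwards [hcond] with ω hω
        calc G ω * μ[fun ω => Real.exp (l * D ω) | F n] ω
            ≤ G ω * Real.exp (c * μ[fun ω => D ω ^ 2 | F n] ω) := by gcongr
          _ = Real.exp (l * M n ω - c * V n ω) := by
            rw [← Real.exp_add]
            simp only [V, D, predQuadVar_succ, Pi.add_apply, Pi.sub_apply]
            congr 1; ring

theorem Martingale.measure_exists_ge_and_predQuadVar_lt_le_exp {Ω : Type*}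
    {m0 : MeasurableSpace Ω} {μ : Measure Ω} [IsProbabilityMeasure μ] {F : Filtration ℕ m0}
    {M : ℕ → Ω → ℝ} (hM : Martingale M F μ) (hM0 : ∀ ω, M 0 ω = 0) {A : ℝ}
    (hbdd : ∀ n, ∀ᵐ ω ∂μ, |M (n + 1) ω - M n ω| ≤ A) {l c : ℝ} (hl : 0 ≤ l) (hc : 0 ≤ c)
    (hquad : ∀ x, |x| ≤ A → Real.exp (l * x) ≤ 1 + l * x + c * x ^ 2) (δ ρ : ℝ) (N : ℕ) :
    μ {ω | (∃ n ≤ N, δ ≤ M n ω) ∧ predQuadVar μ F M N ω < ρ} ≤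
      ENNReal.ofReal (Real.exp (-(l * δ - c * ρ))) := by
  set Z := fun n ω => Real.exp (l * M n ω - c * predQuadVar μ F M n ω)
  set S := {ω | ∃ n ≤ N, Real.exp (l * δ - c * ρ) ≤ Z n ω}
  have hmax := (hM.supermartingale_exp_mul_sub_predQuadVar hM0 hbdd hc hquad
    ).mul_measureReal_exists_le_le_integral (fun _ _ => (Real.exp_pos _).le)
    (Real.exp (l * δ - c * ρ)) N
  simp only [hM0, predQuadVar_zero, Pi.zero_apply, mul_zero, sub_zero, Real.exp_zero,
    integral_const, probReal_univ, smul_eq_mul, one_mul] at hmax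
  have hsub : {ω | (∃ n ≤ N, δ ≤ M n ω) ∧ predQuadVar μ F M N ω < ρ} ≤ᵐ[μ] S := by
    filter_upwards [ae_monotone_predQuadVar] with ω hmono
    rintro ⟨⟨n, hn, hδn⟩, hρN⟩
    refine ⟨n, hn, Real.exp_le_exp.mpr ?_⟩
    have := (hmono hn).trans_lt hρN
    nlinarith
  calc μ {ω | (∃ n ≤ N, δ ≤ M n ω) ∧ predQuadVar μ F M N ω < ρ} ≤ μ S := measure_mono_ae hsub
    _ = ENNReal.ofReal (μ.real S) := (ofReal_measureReal (measure_ne_top _ _)).symm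
    _ ≤ ENNReal.ofReal (Real.exp (-(l * δ - c * ρ))) := by
        gcongr
        rw [Real.exp_neg, ← one_div, le_div_iff₀' (Real.exp_pos _)]
        exact hmax

theorem Martingale.measure_exists_ge_and_predQuadVar_lt_le {Ω : Type*} {m0 : MeasurableSpace Ω}
    {μ : Measure Ω} [IsProbabilityMeasure μ] {F : Filtration ℕ m0} {M : ℕ → Ω → ℝ}
    (hM : Martingale M F μ) (hM0 : ∀ ω, M 0 ω = 0) {A : ℝ} (hA : 0 ≤ A)
    (hbdd : ∀ n, ∀ᵐ ω ∂μ, |M (n + 1) ω - M n ω| ≤ A) {δ ρ : ℝ} (hδ : 0 < δ) (hρ : 0 < ρ)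
    (N : ℕ) :
    μ {ω | (∃ n ≤ N, δ ≤ M n ω) ∧ predQuadVar μ F M N ω < ρ} ≤
      ENNReal.ofReal (Real.exp (-δ ^ 2 / (2 * (A * δ + ρ)))) := by
  have hAδρ : 0 < A * δ + ρ := by positivity
  set l := δ / (A * δ + ρ)
  have hlA : l * A < 1 := by
    rw [div_mul_eq_mul_div, div_lt_one hAδρ]; linarith
  have hexponent : l * δ - l ^ 2 / (2 * (1 - l * A)) * ρ = δ ^ 2 / (2 * (A * δ + ρ)) := by
    have h1 : 1 - l * A = ρ / (A * δ + ρ) := by simp only [l]; field_simp; ring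
    simp only [h1, l]
    field_simp
    ring
  rw [neg_div, ← hexponent]
  exact hM.measure_exists_ge_and_predQuadVar_lt_le_exp hM0 hbdd (by positivity)
    (div_nonneg (sq_nonneg l) (by linarith)) (fun x hx => Real.exp_mul_le_one_add_add_sq
      (by positivity) hlA hx) δ ρ N

end MeasureTheory

theorem stmt_2 {Ω : Type*} {m0 : MeasurableSpace Ω} {μ : Measure Ω}
    [IsProbabilityMeasure μ] (F : Filtration ℕ m0)
    (M : ℕ → Ω → ℝ) (hM : Martingale M F μ) (hM0 : ∀ ω, M 0 ω = 0)
    (A : ℝ) (hA : 0 < A)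
    (hbdd : ∀ n, ∀ᵐ ω ∂μ, |M (n + 1) ω - M n ω| ≤ A)
    (V : ℕ → Ω → ℝ)
    (hV : ∀ n ω, V n ω =
      ∑ k ∈ Finset.range n, (μ[fun ω' => (M (k + 1) ω' - M k ω') ^ 2 | F k]) ω)
    (δ ρ : ℝ) (hδ : 0 < δ) (hρ : 0 < ρ) (N : ℕ) :
    μ {ω | (∃ n ≤ N, δ ≤ |M n ω|) ∧ V N ω < ρ} ≤
      ENNReal.ofReal (2 * Real.exp (-δ ^ 2 / (2 * (A * δ + ρ)))) := by
  obtain rfl : V = predQuadVar μ F M := funext fun n => funext (hV n)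
  have hupper := hM.measure_exists_ge_and_predQuadVar_lt_le hM0 hA.le hbdd hδ hρ N
  have hlower := hM.neg.measure_exists_ge_and_predQuadVar_lt_le (by simp [hM0]) hA.le
    (fun n => (hbdd n).mono fun ω h => by
      simp only [Pi.neg_apply, neg_sub_neg]; rwa [abs_sub_comm]) hδ hρ N
  rw [predQuadVar_neg] at hlower
  calc μ {ω | (∃ n ≤ N, δ ≤ |M n ω|) ∧ predQuadVar μ F M N ω < ρ}
      ≤ μ ({ω | (∃ n ≤ N, δ ≤ M n ω) ∧ predQuadVar μ F M N ω < ρ} ∪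
          {ω | (∃ n ≤ N, δ ≤ (-M) n ω) ∧ predQuadVar μ F M N ω < ρ}) := by
        refine measure_mono fun ω ⟨⟨n, hn, hδn⟩, hρN⟩ => ?_
        rcases le_abs.mp hδn with h | h
        · exact .inl ⟨⟨n, hn, h⟩, hρN⟩
        · exact .inr ⟨⟨n, hn, h⟩, hρN⟩
    _ ≤ _ := (measure_union_le _ _).trans (add_le_add hupper hlower)
    _ = ENNReal.ofReal (2 * Real.exp (-δ ^ 2 / (2 * (A * δ + ρ)))) := by
        rw [← ENNReal.ofReal_add (by positivity) (by positivity)]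
        ring_nf
end
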